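/- 2/(1−ε)-approximation for minimum vertex cover via an ε-maximal edge packing (ratio content of Corollary 4.3): let ε ∈ [0,1). If p is a feasible edge packing and C ⊆ V is a vertex cover such that ∑_{e ∈ 𝓔, v ∈ e} p_e ≥ (1 − ε) * w_v for every v ∈ C, then for every vertex cover C' ⊆ V one has ∑_{v ∈ C} w_v ≤ (2 / (1 − ε)) * ∑_{v ∈ C'} w_v. -/
import Mathlib

lemma double_count {V : Type*} [Fintype V] [DecidableEq V]
    (E : Finset (Sym2 V)) (p : Sym2 V → ℝ) (S : Finset V) :
    ∑ v ∈ S, ∑ e ∈ E.filter (fun e => v ∈ e), p e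
      = ∑ e ∈ E, ((S.filter (fun v => v ∈ e)).card : ℝ) * p e := by
  simp only [Finset.sum_filter]
  rw [Finset.sum_comm]
  refine Finset.sum_congr rfl fun e _ => ?_
  rw [← Finset.sum_filter, Finset.sum_const, nsmul_eq_mul]

lemma card_filter_mem_sym2 {V : Type*} [DecidableEq V] (S : Finset V) (e : Sym2 V) :
    (S.filter (fun v => v ∈ e)).card ≤ 2 := by
  induction e using Sym2.inductionOn with
  | hf a b =>
    calc (S.filter (fun v => v ∈ s(a, b))).card
        ≤ ({a, b} : Finset V).card := by
          apply Finset.card_le_card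
          intro v hv
          simp only [Finset.mem_filter, Sym2.mem_iff] at hv
          simp [hv.2]
      _ ≤ 2 := Finset.card_insert_le _ _ |>.trans (by simp)

/-- 2/(1−ε)-approximation for minimum vertex cover via an ε-maximal edge
packing: for `ε ∈ [0,1)`, if `p` is a feasible edge packing and `C` is a
vertex cover with `∑_{e ∋ v} p e ≥ (1 − ε) * w v` for every `v ∈ C`, then
`∑_{v ∈ C} w v ≤ (2 / (1 − ε)) * ∑_{v ∈ C'} w v` for every vertex cover `C'`. -/
theorem vertexCover_eps_approximation {V : Type*} [Fintype V] [DecidableEq V]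
    (G : SimpleGraph V) [DecidableRel G.Adj]
    (w : V → ℝ) (hw : ∀ v, 0 ≤ w v)
    (ε : ℝ) (hε0 : 0 ≤ ε) (hε1 : ε < 1)
    (p : Sym2 V → ℝ)
    (hp0 : ∀ e ∈ G.edgeFinset, 0 ≤ p e)
    (hpfeas : ∀ v : V, ∑ e ∈ G.edgeFinset.filter (fun e => v ∈ e), p e ≤ w v)
    (C : Finset V) (hC : ∀ e ∈ G.edgeFinset, ∃ v ∈ C, v ∈ e)
    (htight : ∀ v ∈ C,
      (1 - ε) * w v ≤ ∑ e ∈ G.edgeFinset.filter (fun e => v ∈ e), p e) :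
    ∀ C' : Finset V, (∀ e ∈ G.edgeFinset, ∃ v ∈ C', v ∈ e) →
      ∑ v ∈ C, w v ≤ (2 / (1 - ε)) * ∑ v ∈ C', w v := by
  intro C' hC'
  have hpos : (0:ℝ) < 1 - ε := by linarith
  have h1 : (1 - ε) * ∑ v ∈ C, w v
      ≤ ∑ e ∈ G.edgeFinset, ((C.filter (fun v => v ∈ e)).card : ℝ) * p e := by
    rw [Finset.mul_sum, ← double_count]
    exact Finset.sum_le_sum fun v hv => htight v hv
  have h2 : ∑ e ∈ G.edgeFinset, ((C.filter (fun v => v ∈ e)).card : ℝ) * p e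
      ≤ ∑ e ∈ G.edgeFinset, 2 * p e := by
    refine Finset.sum_le_sum fun e he => ?_
    have := card_filter_mem_sym2 C e
    have : ((C.filter (fun v => v ∈ e)).card : ℝ) ≤ 2 := by exact_mod_cast this
    exact mul_le_mul_of_nonneg_right this (hp0 e he)
  have h3 : ∑ e ∈ G.edgeFinset, 2 * p e
      ≤ ∑ e ∈ G.edgeFinset, 2 * (((C'.filter (fun v => v ∈ e)).card : ℝ) * p e) := by
    refine Finset.sum_le_sum fun e he => ?_
    have hcard : 1 ≤ (C'.filter (fun v => v ∈ e)).card := by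
      obtain ⟨v, hv, hve⟩ := hC' e he
      exact Finset.card_pos.mpr ⟨v, Finset.mem_filter.mpr ⟨hv, hve⟩⟩
    have : (1:ℝ) ≤ ((C'.filter (fun v => v ∈ e)).card : ℝ) := by exact_mod_cast hcard
    nlinarith [hp0 e he]
  have h4 : ∑ e ∈ G.edgeFinset, 2 * (((C'.filter (fun v => v ∈ e)).card : ℝ) * p e)
      ≤ 2 * ∑ v ∈ C', w v := by
    rw [← Finset.mul_sum, ← double_count]
    have : ∑ v ∈ C', ∑ e ∈ G.edgeFinset.filter (fun e => v ∈ e), p e ≤ ∑ v ∈ C', w v :=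
      Finset.sum_le_sum fun v _ => hpfeas v
    linarith
  rw [div_mul_eq_mul_div, le_div_iff₀ hpos]
  nlinarith
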